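/- For an [[n,1]] stabilizer code with bipartition A, B: if all three logical cosets X̄G, ȲG, Z̄G have representatives supported on A, then no logical coset has a representative supported on B. -/

import Mathlib

open Matrix BigOperators Finset

/-- The four single-qubit Pauli matrices `I, X, Y, Z`. -/
noncomputable def pauli1 : Fin 4 → Matrix (Fin 2) (Fin 2) ℂ :=
  ![(1 : Matrix (Fin 2) (Fin 2) ℂ),
    !![0, 1; 1, 0],
    !![0, -Complex.I; Complex.I, 0],
    !![1, 0; 0, -1]]

/-- The `n`-qubit Pauli string `⨂ₖ pauli1 (s k)` as a matrix on `(Fin n → Fin 2)`. -/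
noncomputable def pauliString {n : ℕ} (s : Fin n → Fin 4) :
    Matrix (Fin n → Fin 2) (Fin n → Fin 2) ℂ :=
  Matrix.of fun i j => ∏ k, pauli1 (s k) (i k) (j k)

/-- `M` is a Pauli operator with phase `±1`. -/
def IsPauliPM {n : ℕ} (M : Matrix (Fin n → Fin 2) (Fin n → Fin 2) ℂ) : Prop :=
  ∃ (ε : ℂ) (s : Fin n → Fin 4), (ε = 1 ∨ ε = -1) ∧ M = ε • pauliString s

/-- `M` is a `±1`-phase Pauli operator whose support is contained in `A`. -/
def SuppIn {n : ℕ} (A : Finset (Fin n)) (M : Matrix (Fin n → Fin 2) (Fin n → Fin 2) ℂ) : Prop :=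
  ∃ (ε : ℂ) (s : Fin n → Fin 4), (ε = 1 ∨ ε = -1) ∧ M = ε • pauliString s ∧
    ∀ k ∉ A, s k = 0

/-- The element `∏_{i : f i} g i` of the group generated by the (commuting) `g i`. -/
noncomputable def grpElem {n m : ℕ} (g : Fin m → Matrix (Fin n → Fin 2) (Fin n → Fin 2) ℂ)
    (f : Fin m → Bool) : Matrix (Fin n → Fin 2) (Fin n → Fin 2) ℂ :=
  ((List.finRange m).map (fun i => if f i then g i else 1)).prod

/-- Mixed-state stabilizer 2-Rényi entropy
`M̃₂(ρ) = −log₂( Σ_P Tr(ρP)⁴ / Σ_P Tr(ρP)² )`. -/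
noncomputable def sre2 {n : ℕ} (ρ : Matrix (Fin n → Fin 2) (Fin n → Fin 2) ℂ) : ℝ :=
  - Real.logb 2 (((∑ P : Fin n → Fin 4, ((ρ * pauliString P).trace) ^ 4) /
      (∑ P : Fin n → Fin 4, ((ρ * pauliString P).trace) ^ 2)).re)

/-- The logical coset `L⟨g⟩` has a (±1-phase) representative supported inside `A`. -/
def RepOn {n m : ℕ} (g : Fin m → Matrix (Fin n → Fin 2) (Fin n → Fin 2) ℂ)
    (A : Finset (Fin n)) (L : Matrix (Fin n → Fin 2) (Fin n → Fin 2) ℂ) : Prop :=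
  ∃ f : Fin m → Bool, SuppIn A (L * grpElem g f)

/-! Representatives of distinct logical cosets anticommute, because the stabilizer elements
commute with the logicals and with each other. Pauli operators with disjoint supports commute,
and two invertible operators cannot both commute and anticommute. Each coset anticommutes with
another one, so its representative on `Aᶜ` would both commute and anticommute with that
other coset's representative on `A`. -/

lemma pauli1_mul_self (a : Fin 4) : pauli1 a * pauli1 a = 1 := by
  fin_cases a <;> ext i j <;> fin_cases i <;> fin_cases j <;> simp [pauli1, Matrix.mul_apply]

lemma pauliString_mul_pauliString {n : ℕ} (s t : Fin n → Fin 4) :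
    pauliString s * pauliString t =
      Matrix.of fun i j => ∏ k, (pauli1 (s k) * pauli1 (t k)) (i k) (j k) := by
  ext i j
  simp only [pauliString, Matrix.mul_apply, Matrix.of_apply, ← Finset.prod_mul_distrib]
  rw [Finset.prod_univ_sum, Fintype.piFinset_univ]

lemma pauliString_mul_self {n : ℕ} (s : Fin n → Fin 4) : pauliString s * pauliString s = 1 := by
  ext i j
  simp [pauliString_mul_pauliString, pauli1_mul_self, Matrix.one_apply, Finset.prod_boole,
    funext_iff]

lemma pauliString_commute {n : ℕ} {s t : Fin n → Fin 4}
    (h : ∀ k, Commute (pauli1 (s k)) (pauli1 (t k))) :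
    Commute (pauliString s) (pauliString t) := by
  simp only [Commute, SemiconjBy, pauliString_mul_pauliString, (h _).eq]

lemma IsPauliPM.mul_self {n : ℕ} {M : Matrix (Fin n → Fin 2) (Fin n → Fin 2) ℂ}
    (h : IsPauliPM M) : M * M = 1 := by
  obtain ⟨ε, s, hε | hε, rfl⟩ := h <;>
    simp [hε, pauliString_mul_self]

lemma IsPauliPM.isUnit {n : ℕ} {M : Matrix (Fin n → Fin 2) (Fin n → Fin 2) ℂ}
    (h : IsPauliPM M) : IsUnit M :=
  IsUnit.of_mul_eq_one M h.mul_self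

lemma SuppIn.isPauliPM {n : ℕ} {A : Finset (Fin n)} {M : Matrix (Fin n → Fin 2) (Fin n → Fin 2) ℂ}
    (h : SuppIn A M) : IsPauliPM M :=
  let ⟨ε, s, hε, hM, _⟩ := h
  ⟨ε, s, hε, hM⟩

lemma SuppIn.commute_of_disjoint {n : ℕ} {A B : Finset (Fin n)} (hAB : Disjoint A B)
    {M N : Matrix (Fin n → Fin 2) (Fin n → Fin 2) ℂ} (hM : SuppIn A M) (hN : SuppIn B N) :
    Commute M N := by
  obtain ⟨ε, s, -, rfl, hs⟩ := hM
  obtain ⟨δ, t, -, rfl, ht⟩ := hN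
  refine ((pauliString_commute fun k => ?_).smul_left ε).smul_right δ
  by_cases hk : k ∈ A
  · simp [ht k (Finset.disjoint_left.mp hAB hk), pauli1]
  · simp [hs k hk, pauli1]

def Anticommute {R : Type*} [Mul R] [Neg R] (a b : R) : Prop := a * b = -(b * a)

namespace Anticommute

variable {R : Type*} [Ring R] {a b c d : R}

lemma symm (h : Anticommute a b) : Anticommute b a := by
  rw [Anticommute, h, neg_neg]

lemma mul_mul (hab : Anticommute a b) (hbc : Commute b c) (had : Commute a d)
    (hcd : Commute c d) : Anticommute (a * c) (b * d) := by
  calc a * c * (b * d) = a * b * (c * d) := by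
        rw [mul_assoc, ← mul_assoc c, ← hbc.eq, mul_assoc, mul_assoc]
    _ = -(b * a * (d * c)) := by rw [hab, hcd.eq, neg_mul]
    _ = -(b * d * (a * c)) := by
        rw [mul_assoc, ← mul_assoc a, had.eq, mul_assoc, mul_assoc]

lemma mul_right_self (h : Anticommute a b) : Anticommute a (a * b) := by
  rw [Anticommute, mul_assoc a b a, h.symm, mul_neg, neg_neg]

lemma smul_right {S : Type*} [Monoid S] [DistribMulAction S R] [SMulCommClass S R R]
    [IsScalarTower S R R] (h : Anticommute a b) (r : S) : Anticommute a (r • b) := by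
  rw [Anticommute, mul_smul_comm, smul_mul_assoc, h, smul_neg]

lemma not_commute [Nontrivial R] [Module ℚ R] (h : Anticommute a b) (ha : IsUnit a)
    (hb : IsUnit b) : ¬ Commute a b := by
  intro hc
  have : (2 : ℚ) • (a * b) = 0 := by
    rw [two_smul]; nth_rewrite 2 [hc.eq]; rw [h, neg_add_cancel]
  exact (ha.mul hb).ne_zero ((smul_eq_zero.mp this).resolve_left two_ne_zero)

end Anticommute

lemma commute_grpElem {n m : ℕ} {g : Fin m → Matrix (Fin n → Fin 2) (Fin n → Fin 2) ℂ}
    {M : Matrix (Fin n → Fin 2) (Fin n → Fin 2) ℂ} (h : ∀ i, Commute M (g i)) (f : Fin m → Bool) :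
    Commute M (grpElem g f) := by
  refine Commute.list_prod_right _ M fun x hx => ?_
  obtain ⟨i, -, rfl⟩ := List.mem_map.mp hx
  split_ifs
  exacts [h i, Commute.one_right M]

lemma RepOn.not_repOn_compl_of_anticommute {n m : ℕ}
    {g : Fin m → Matrix (Fin n → Fin 2) (Fin n → Fin 2) ℂ} (hcomm : ∀ i j, Commute (g i) (g j))
    {A : Finset (Fin n)} {L L' : Matrix (Fin n → Fin 2) (Fin n → Fin 2) ℂ}
    (hL : ∀ i, Commute L (g i)) (hL' : ∀ i, Commute L' (g i)) (hanti : Anticommute L L')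
    (h' : RepOn g A L') : ¬ RepOn g Aᶜ L := by
  rintro ⟨f, hf⟩
  obtain ⟨f', hf'⟩ := h'
  have hG : Commute (grpElem g f) (grpElem g f') :=
    commute_grpElem (fun i => (commute_grpElem (fun j => hcomm i j) f).symm) f'
  exact (hanti.mul_mul (commute_grpElem hL' f) (commute_grpElem hL f') hG).not_commute
    hf.isPauliPM.isUnit hf'.isPauliPM.isUnit (hf.commute_of_disjoint disjoint_compl_left hf')

theorem stmt_16_general {n m : ℕ}
    (g : Fin m → Matrix (Fin n → Fin 2) (Fin n → Fin 2) ℂ)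
    (Xb Zb Yb : Matrix (Fin n → Fin 2) (Fin n → Fin 2) ℂ)
    (hcomm : ∀ i i', g i * g i' = g i' * g i)
    (hXcomm : ∀ i, Xb * g i = g i * Xb) (hZcomm : ∀ i, Zb * g i = g i * Zb)
    (hanti : Xb * Zb = -(Zb * Xb))
    (hYb : Yb = Complex.I • (Xb * Zb))
    (A : Finset (Fin n))
    (hA : RepOn g A Xb ∧ RepOn g A Yb ∧ RepOn g A Zb) :
    ¬ (RepOn g Aᶜ Xb ∨ RepOn g Aᶜ Yb ∨ RepOn g Aᶜ Zb) := by
  obtain ⟨hXA, hYA, -⟩ := hA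
  have hX : ∀ i, Commute Xb (g i) := hXcomm
  have hXZ : Anticommute Xb Zb := hanti
  have hYcomm : ∀ i, Commute Yb (g i) := fun i =>
    hYb ▸ ((hX i).mul_left (hZcomm i)).smul_left Complex.I
  have hXY : Anticommute Xb Yb := hYb ▸ hXZ.mul_right_self.smul_right Complex.I
  rintro (hXB | hYB | hZB)
  · exact hYA.not_repOn_compl_of_anticommute hcomm hX hYcomm hXY hXB
  · exact hXA.not_repOn_compl_of_anticommute hcomm hYcomm hX hXY.symm hYB
  · exact hXA.not_repOn_compl_of_anticommute hcomm hZcomm hX hXZ.symm hZB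

/-- for an [[n,1]] stabilizer code and bipartition `A, Aᶜ`: if all three
logical cosets have representatives supported on `A`, then no logical coset has a
representative supported on `Aᶜ`. -/
theorem stmt_16 {n m : ℕ} (hnm : n = m + 1)
    (g : Fin m → Matrix (Fin n → Fin 2) (Fin n → Fin 2) ℂ)
    (Xb Zb Yb : Matrix (Fin n → Fin 2) (Fin n → Fin 2) ℂ)
    (hg : ∀ i, IsPauliPM (g i))
    (hcomm : ∀ i i', g i * g i' = g i' * g i)
    (hindep : ∀ f f' : Fin m → Bool, grpElem g f = grpElem g f' → f = f')
    (hnoNegI : ∀ f : Fin m → Bool, grpElem g f ≠ -1)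
    (hXb : IsPauliPM Xb) (hZb : IsPauliPM Zb)
    (hXcomm : ∀ i, Xb * g i = g i * Xb) (hZcomm : ∀ i, Zb * g i = g i * Zb)
    (hanti : Xb * Zb = -(Zb * Xb))
    (hXnot : ∀ (f : Fin m → Bool) (ε : ℂ), (ε = 1 ∨ ε = -1) → Xb ≠ ε • grpElem g f)
    (hZnot : ∀ (f : Fin m → Bool) (ε : ℂ), (ε = 1 ∨ ε = -1) → Zb ≠ ε • grpElem g f)
    (hYb : Yb = Complex.I • (Xb * Zb))
    (A : Finset (Fin n))
    (hA : RepOn g A Xb ∧ RepOn g A Yb ∧ RepOn g A Zb) :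
    ¬ (RepOn g Aᶜ Xb ∨ RepOn g Aᶜ Yb ∨ RepOn g Aᶜ Zb) :=
  stmt_16_general g Xb Zb Yb hcomm hXcomm hZcomm hanti hYb A hA
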